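/- arXiv:1112.6057 — 3 statements merged into one kernel-verified Lean document; each statement's English description precedes it below -/
import Mathlib

section
/- Let R be a commutative ring with identity, let U be an R-module, and let I₁ and I₂ be comaximal ideals of R (i.e., I₁ + I₂ = R). Then the colon module of their intersection decomposes as an internal direct sum: M(I₁ ∩ I₂) = M(I₁) + M(I₂) and M(I₁) ∩ M(I₂) = {0}. -/
/-- The colon module `M(I) = {m ∈ U | s • m = 0 for all s ∈ I}` of `0` by the
ideal `I` in the `R`-module `U`. -/
def colonModule {R : Type*} [CommRing R] (U : Type*) [AddCommGroup U] [Module R U]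
    (I : Ideal R) : Submodule R U where
  carrier := {m | ∀ s ∈ I, s • m = 0}
  add_mem' := by
    intro a b ha hb s hs
    rw [smul_add, ha s hs, hb s hs, add_zero]
  zero_mem' := by
    intro s hs
    simp
  smul_mem' := by
    intro c m hm s hs
    rw [smul_comm, hm s hs, smul_zero]

/-- If `I₁` and `I₂` are comaximal ideals of a commutative ring `R` and `U` is an
`R`-module, then `M(I₁ ∩ I₂) = M(I₁) + M(I₂)` and `M(I₁) ∩ M(I₂) = 0`, i.e.
the colon module of `I₁ ∩ I₂` is the internal direct sum of `M(I₁)` and `M(I₂)`. -/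
theorem colonModule_inf_of_comaximal {R : Type*} [CommRing R]
    (U : Type*) [AddCommGroup U] [Module R U]
    (I₁ I₂ : Ideal R) (h : I₁ ⊔ I₂ = ⊤) :
    colonModule U (I₁ ⊓ I₂) = colonModule U I₁ ⊔ colonModule U I₂ ∧
      colonModule U I₁ ⊓ colonModule U I₂ = ⊥ := by
  obtain ⟨a, ha, b, hb, hab⟩ := Submodule.mem_sup.mp (h ▸ Submodule.mem_top : (1:R) ∈ I₁ ⊔ I₂)
  constructor
  · apply le_antisymm
    · intro m hm
      have hm' : ∀ s ∈ I₁ ⊓ I₂, s • m = 0 := hm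
      have h1 : b • m ∈ colonModule U I₁ := by
        intro s hs
        rw [smul_smul]
        exact hm' (s * b) ⟨Ideal.mul_mem_right _ _ hs, Ideal.mul_mem_left _ _ hb⟩
      have h2 : a • m ∈ colonModule U I₂ := by
        intro s hs
        rw [smul_smul]
        exact hm' (s * a) ⟨Ideal.mul_mem_left _ _ ha, Ideal.mul_mem_right _ _ hs⟩
      have : m = b • m + a • m := by
        rw [← add_smul, add_comm b a, hab, one_smul]
      rw [this]
      exact Submodule.add_mem_sup h1 h2
    · apply sup_le
      · intro m hm s hs
        exact hm s hs.1
      · intro m hm s hs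
        exact hm s hs.2
  · rw [eq_bot_iff]
    rintro m ⟨h1, h2⟩
    have : m = a • m + b • m := by rw [← add_smul, hab, one_smul]
    rw [Submodule.mem_bot, this, h1 a ha, h2 b hb, add_zero]
end

section
/- Let q be a prime power, let k be a field containing F_q as a subfield (equivalently, a field that is an F_q-algebra), and let I₀ be a proper quasi-primary ideal of the polynomial ring k[x₁,…,x_n]. Consider the F_q-linear map Ψ_{I₀} on the quotient ring k[x₁,…,x_n]/I₀ defined by Ψ_{I₀}(f̄) = f̄^q − f̄. Then the kernel of Ψ_{I₀} is exactly the image of F_q under the natural map F_q → k[x₁,…,x_n]/I₀; that is, {f̄ ∈ k[x₁,…,x_n]/I₀ : f̄^q = f̄} = F_q·1̄. -/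
/-!
Over `F_q` one has `X ^ q - X = ∏ a : F_q, (X - a)`, so a solution of `f ^ q = f` in an
`F_q`-algebra `R` makes `∏ a, (f - a)` vanish. If the nilradical of `R` is prime (as it is for
`R = k[x₁,…,x_n]/I₀` with `√I₀` prime), some `f - a` is nilpotent. Frobenius fixes `F_q`, so
`(f - a) ^ q = f - a`, and a nilpotent element fixed by a power map is zero.
-/

open Polynomial

theorem IsNilpotent.eq_zero_of_pow_eq_self {R : Type*} [Ring R] {x : R} (hx : IsNilpotent x)
    {n : ℕ} (hn : 1 < n) (h : x ^ n = x) : x = 0 := by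
  have hunit : IsUnit (1 - x ^ (n - 1)) := (hx.pow_of_pos (by omega)).isUnit_one_sub
  have : x * (1 - x ^ (n - 1)) = 0 := by
    rw [mul_sub, mul_one, ← pow_succ', Nat.sub_add_cancel hn.le, h, sub_self]
  simpa using hunit.mul_left_eq_zero.mp this

namespace FiniteField

variable {K : Type*} [Field K] [Fintype K]

theorem prod_X_sub_C_eq_X_pow_card_sub_X :
    ∏ a : K, (X - C a) = (X ^ Fintype.card K - X : K[X]) := by
  have hdeg := X_pow_card_sub_X_natDegree_eq K (Fintype.one_lt_card (α := K))
  have hmonic : (X ^ Fintype.card K - X : K[X]).Monic :=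
    monic_X_pow_sub (by rw [degree_X]; exact_mod_cast Fintype.one_lt_card)
  have := prod_multiset_X_sub_C_of_monic_of_roots_card_eq hmonic
    (by rw [roots_X_pow_card_sub_X, hdeg]; rfl)
  rwa [roots_X_pow_card_sub_X] at this

variable {R : Type*} [CommRing R] [Algebra K R]

theorem prod_sub_algebraMap_eq_pow_card_sub (x : R) :
    ∏ a : K, (x - algebraMap K R a) = x ^ Fintype.card K - x := by
  simpa using congrArg (aeval x) (prod_X_sub_C_eq_X_pow_card_sub_X (K := K))

theorem pow_card_eq_self_iff_mem_range (hR : (nilradical R).IsPrime) {x : R} :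
    x ^ Fintype.card K = x ↔ x ∈ Set.range (algebraMap K R) := by
  refine ⟨fun hx ↦ ?_, ?_⟩
  · have hprod : ∏ a : K, (x - algebraMap K R a) ∈ nilradical R := by
      rw [prod_sub_algebraMap_eq_pow_card_sub, hx, sub_self]
      exact zero_mem _
    obtain ⟨a, -, ha⟩ := hR.prod_mem_iff.mp hprod
    have hfrob : (x - algebraMap K R a) ^ Fintype.card K = x - algebraMap K R a := by
      simpa [hx] using map_sub (frobeniusAlgHom K R) x (algebraMap K R a)
    exact ⟨a, (sub_eq_zero.mp ((mem_nilradical.mp ha).eq_zero_of_pow_eq_self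
      Fintype.one_lt_card hfrob)).symm⟩
  · rintro ⟨a, rfl⟩
    rw [← map_pow, pow_card]

end FiniteField

theorem Ideal.nilradical_quotient_isPrime {A : Type*} [CommRing A] {I : Ideal A}
    (hI : I.radical.IsPrime) : (nilradical (A ⧸ I)).IsPrime := by
  have hmap : I.radical.map (Ideal.Quotient.mk I) = nilradical (A ⧸ I) := by
    rw [Ideal.map_radical_of_surjective Ideal.Quotient.mk_surjective (Ideal.mk_ker.le),
      Ideal.map_quotient_self]
    rfl
  rw [← hmap]
  exact Ideal.map_isPrime_of_surjective Ideal.Quotient.mk_surjective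
    (Ideal.mk_ker.trans_le Ideal.le_radical)

theorem ker_psi_of_quasiPrimary_general
    {Fq k : Type*} [Field Fq] [Fintype Fq] [Field k] [Algebra Fq k]
    (n : ℕ) (I₀ : Ideal (MvPolynomial (Fin n) k))
    (hqp : I₀.radical.IsPrime) :
    {f : MvPolynomial (Fin n) k ⧸ I₀ | f ^ Fintype.card Fq = f} =
      Set.range (algebraMap Fq (MvPolynomial (Fin n) k ⧸ I₀)) :=
  Set.ext fun _ ↦
    FiniteField.pow_card_eq_self_iff_mem_range (Ideal.nilradical_quotient_isPrime hqp)

/-- Let `k` be a field containing the finite field `F_q` (i.e. a field that is an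
`F_q`-algebra) and let `I₀` be a proper quasi-primary ideal of `k[x₁,…,x_n]`
(i.e. `√I₀` is prime).  Then the kernel of the `F_q`-linear map
`Ψ_{I₀} : f̄ ↦ f̄^q − f̄` on `k[x₁,…,x_n]/I₀`, i.e. the set `{f̄ : f̄^q = f̄}`, is
exactly the image of `F_q` under the natural map `F_q → k[x₁,…,x_n]/I₀`. -/
theorem ker_psi_of_quasiPrimary
    {Fq k : Type*} [Field Fq] [Fintype Fq] [Field k] [Algebra Fq k]
    (n : ℕ) (I₀ : Ideal (MvPolynomial (Fin n) k)) (hproper : I₀ ≠ ⊤)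
    (hqp : I₀.radical.IsPrime) :
    {f : MvPolynomial (Fin n) k ⧸ I₀ | f ^ Fintype.card Fq = f} =
      Set.range (algebraMap Fq (MvPolynomial (Fin n) k ⧸ I₀)) :=
  ker_psi_of_quasiPrimary_general n I₀ hqp
end

section
/- Let I ⊆ F_q[x₁,…,x_n] be a zero-dimensional ideal with irredundant primary decomposition I = I₁ ∩ ⋯ ∩ I_t into pairwise comaximal primary ideals, and for each i set J_i = ⋂_{j ≠ i} I_j. Then there exist polynomials h₁, …, h_t ∈ F_q[x₁,…,x_n] such that: (1) h_i ∈ J_i and h_i ∉ I_i for each i; (2) h_i² ≡ h_i (mod I) for each i; (3) h_i·h_j ∈ I whenever i ≠ j; and (4) the residues h̄₁, …, h̄_t form an F_q-basis of Ker(Ψ_I), so that Ker(Ψ_I) is the internal direct sum of the one-dimensional F_q-algebras F_q·h̄₁, …, F_q·h̄_t. -/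
/-!
Comaximality gives polynomials `hᵢ ≡ δᵢⱼ (mod Iⱼ)` (Chinese remainder theorem), and each claim
about them can be checked modulo one `Iⱼ` at a time. The one real input is that modulo a primary
ideal the solutions of `f ^ q = f` are exactly the constants, because `f ^ q - f = ∏ c, (f - c)`
has pairwise coprime factors. Hence `f̄ ^ q = f̄` modulo `I = ⋂ Iⱼ` iff `f ≡ cⱼ (mod Iⱼ)` for
constants `cⱼ`, i.e. iff `f̄ = ∑ cⱼ h̄ⱼ`.
-/

open Polynomial in
theorem FiniteField.prod_X_sub_C_eq_X_pow_card_sub_X_s12 (F : Type*) [Field F] [Fintype F] :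
    ∏ c : F, (X - C c) = X ^ Fintype.card F - X := by
  have hmonic : (X ^ Fintype.card F - X : F[X]).Monic :=
    (monic_X_pow _).sub_of_left <| by
      rw [degree_X, degree_X_pow]; exact_mod_cast Fintype.one_lt_card
  have hroots := FiniteField.roots_X_pow_card_sub_X F
  have hcard : (X ^ Fintype.card F - X : F[X]).roots.card =
      (X ^ Fintype.card F - X : F[X]).natDegree := by
    rw [hroots, FiniteField.X_pow_card_sub_X_natDegree_eq F Fintype.one_lt_card]; rfl
  simpa [hroots] using prod_multiset_X_sub_C_of_monic_of_roots_card_eq hmonic hcard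

theorem FiniteField.prod_sub_algebraMap_eq_pow_card_sub_s12 {F A : Type*} [Field F] [Fintype F]
    [CommRing A] [Algebra F A] (g : A) :
    ∏ c : F, (g - algebraMap F A c) = g ^ Fintype.card F - g := by
  simpa using congrArg (Polynomial.aeval g) (prod_X_sub_C_eq_X_pow_card_sub_X_s12 F)

namespace Ideal

section FiniteField

variable {F A : Type*} [Field F] [CommRing A] [Algebra F A] {K : Ideal A}

theorem algebraMap_mem_iff_eq_zero (hK : K ≠ ⊤) {c : F} : algebraMap F A c ∈ K ↔ c = 0 := by
  refine ⟨fun hc => by_contra fun hne => hK ?_, fun hc => by simp [hc]⟩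
  exact K.eq_top_of_isUnit_mem hc ((isUnit_iff_ne_zero.mpr hne).map _)

variable [Fintype F]

theorem pow_card_sub_mem_of_sub_algebraMap_mem {g : A} {c : F} (h : g - algebraMap F A c ∈ K) :
    g ^ Fintype.card F - g ∈ K := by
  have hsplit : g ^ Fintype.card F - g =
      (g ^ Fintype.card F - algebraMap F A c ^ Fintype.card F) - (g - algebraMap F A c) := by
    rw [← map_pow, FiniteField.pow_card]; ring
  rw [hsplit]
  exact K.sub_mem (K.mem_of_dvd (sub_dvd_pow_sub_pow _ _ _) h) h

/-- Of the factors of `∏ c, (g - c) = g ^ q - g`, exactly one lies in the prime `√K`, since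
any two differ by a unit; primariness then pushes that factor into `K`. -/
theorem IsPrimary.pow_card_sub_mem_iff (hK : K.IsPrimary) {g : A} :
    g ^ Fintype.card F - g ∈ K ↔ ∃ c : F, g - algebraMap F A c ∈ K := by
  classical
  refine ⟨fun hg => ?_, fun ⟨c, hc⟩ => pow_card_sub_mem_of_sub_algebraMap_mem hc⟩
  have hrad := isPrime_radical hK
  rw [← FiniteField.prod_sub_algebraMap_eq_pow_card_sub_s12] at hg
  obtain ⟨c, -, hc⟩ := hrad.prod_mem_iff.mp (le_radical hg)
  refine ⟨c, ((isPrimary_iff.mp hK).2 (x := g - algebraMap F A c)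
    (y := ∏ d ∈ Finset.univ.erase c, (g - algebraMap F A d)) ?_).resolve_right ?_⟩
  · rwa [Finset.mul_prod_erase _ (fun d => g - algebraMap F A d) (Finset.mem_univ c)]
  rw [hrad.prod_mem_iff]
  rintro ⟨d, hd, hdrad⟩
  have hdc : algebraMap F A (d - c) ∈ K.radical := by
    simpa [map_sub] using K.radical.sub_mem hc hdrad
  exact Finset.ne_of_mem_erase hd <|
    sub_eq_zero.mp ((algebraMap_mem_iff_eq_zero hrad.ne_top).mp hdc)

theorem IsPrimary.pow_card_eq_self_iff (hK : K.IsPrimary) (g : A) :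
    Quotient.mk K g ^ Fintype.card F = Quotient.mk K g ↔
      Quotient.mk K g ∈ Set.range (algebraMap F (A ⧸ K)) := by
  simp_rw [Set.mem_range, ← map_pow, ← Quotient.mk_algebraMap,
    eq_comm (a := Quotient.mk K (algebraMap F A _)), Quotient.eq]
  exact hK.pow_card_sub_mem_iff

end FiniteField

section Family

variable {R ι : Type*} [CommRing R] {I : ι → Ideal R}

theorem exists_mem_iInf_ne_mk_eq_ite [Finite ι] [DecidableEq ι]
    (hI : Pairwise fun i j => I i ⊔ I j = ⊤) (i : ι) :
    ∃ e ∈ ⨅ j, ⨅ _ : j ≠ i, I j, ∀ j, Quotient.mk (I j) e = if i = j then 1 else 0 := by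
  have := Fintype.ofFinite ι
  have htop : I i ⊔ ⨅ j ∈ Finset.univ.erase i, I j = ⊤ :=
    sup_iInf_eq_top fun j hj => hI (Finset.ne_of_mem_erase hj).symm
  simp only [Finset.mem_erase, Finset.mem_univ, and_true] at htop
  obtain ⟨a, ha, e, he, hae⟩ := Submodule.mem_sup.mp (htop ▸ Submodule.mem_top (x := (1 : R)))
  refine ⟨e, he, fun j => ?_⟩
  split_ifs with hij
  · subst hij
    rw [← map_one (Quotient.mk (I i)), Quotient.eq, ← hae, sub_add_cancel_right]
    exact (I i).neg_mem ha
  · rw [Quotient.eq_zero_iff_mem]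
    exact (Submodule.mem_iInf _).mp ((Submodule.mem_iInf _).mp he j) (Ne.symm hij)

theorem mk_iInf_eq_mk_iff {x y : R} : Quotient.mk (⨅ j, I j) x = Quotient.mk (⨅ j, I j) y ↔
    ∀ j, Quotient.mk (I j) x = Quotient.mk (I j) y := by
  simp only [Quotient.eq, Submodule.mem_iInf]

theorem sum_smul_mk_iInf {F : Type*} [CommSemiring F] [Algebra F R] [Fintype ι] {e : ι → R}
    (c : ι → F) :
    ∑ i, c i • Quotient.mk (⨅ j, I j) (e i) = Quotient.mk (⨅ j, I j) (∑ i, c i • e i) := by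
  rw [← Quotient.mkₐ_eq_mk F, map_sum]
  simp only [map_smul]

end Family

section Kronecker

variable {F A ι : Type*} [Field F] [CommRing A] [Algebra F A] [DecidableEq ι]
  {I : ι → Ideal A} {e : ι → A}

theorem mk_sum_smul_eq_algebraMap [Fintype ι]
    (he : ∀ i j, Quotient.mk (I j) (e i) = if i = j then 1 else 0) (c : ι → F) (j : ι) :
    Quotient.mk (I j) (∑ i, c i • e i) = algebraMap F (A ⧸ I j) (c j) := by
  rw [← Quotient.mkₐ_eq_mk F, map_sum]
  simp only [map_smul, Quotient.mkₐ_eq_mk, he, smul_ite, smul_zero, Finset.sum_ite_eq',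
    Finset.mem_univ, if_true, Algebra.algebraMap_eq_smul_one]

theorem sq_sub_self_mem_iInf (he : ∀ i j, Quotient.mk (I j) (e i) = if i = j then 1 else 0)
    (i : ι) : e i ^ 2 - e i ∈ ⨅ j, I j := by
  refine Submodule.mem_iInf _ |>.mpr fun j => Quotient.eq_zero_iff_mem.mp ?_
  rw [map_sub, map_pow, he]
  split_ifs <;> simp

theorem mul_mem_iInf_of_ne (he : ∀ i j, Quotient.mk (I j) (e i) = if i = j then 1 else 0)
    {i k : ι} (hik : i ≠ k) : e i * e k ∈ ⨅ j, I j := by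
  refine Submodule.mem_iInf _ |>.mpr fun j => Quotient.eq_zero_iff_mem.mp ?_
  rw [map_mul, he, he]
  split_ifs <;> simp_all

theorem notMem_self_of_mk_eq_ite (he : ∀ i j, Quotient.mk (I j) (e i) = if i = j then 1 else 0)
    {i : ι} (hI : I i ≠ ⊤) : e i ∉ I i := by
  have := Quotient.nontrivial_iff.mpr hI
  rw [← Quotient.eq_zero_iff_mem, he, if_pos rfl]
  exact one_ne_zero

theorem linearIndependent_mk_iInf [Fintype ι]
    (he : ∀ i j, Quotient.mk (I j) (e i) = if i = j then 1 else 0) (hI : ∀ j, I j ≠ ⊤) :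
    LinearIndependent F fun i => Quotient.mk (⨅ j, I j) (e i) := by
  refine Fintype.linearIndependent_iff.mpr fun c hc j => ?_
  have hj := mk_sum_smul_eq_algebraMap he c j
  rw [sum_smul_mk_iInf, ← map_zero (Quotient.mk _), mk_iInf_eq_mk_iff] at hc
  rw [hc j, map_zero, eq_comm, ← Quotient.mk_algebraMap, Quotient.eq_zero_iff_mem] at hj
  exact (algebraMap_mem_iff_eq_zero (hI j)).mp hj

theorem mk_iInf_mem_span_iff [Fintype ι] [Fintype F]
    (he : ∀ i j, Quotient.mk (I j) (e i) = if i = j then 1 else 0) (hI : ∀ j, (I j).IsPrimary)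
    (g : A) :
    Quotient.mk (⨅ j, I j) g ∈
        Submodule.span F (Set.range fun i => Quotient.mk (⨅ j, I j) (e i)) ↔
      Quotient.mk (⨅ j, I j) g ^ Fintype.card F = Quotient.mk (⨅ j, I j) g := by
  calc _ ↔ ∃ c : ι → F, ∀ j, algebraMap F (A ⧸ I j) (c j) = Quotient.mk (I j) g := by
        simp only [Submodule.mem_span_range_iff_exists_fun, sum_smul_mk_iInf, mk_iInf_eq_mk_iff,
          mk_sum_smul_eq_algebraMap he]
    _ ↔ ∀ j, Quotient.mk (I j) g ∈ Set.range (algebraMap F (A ⧸ I j)) :=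
        (Classical.skolem (p := fun j c => algebraMap F (A ⧸ I j) c = Quotient.mk (I j) g)).symm
    _ ↔ ∀ j, Quotient.mk (I j) g ^ Fintype.card F = Quotient.mk (I j) g :=
        forall_congr' fun j => ((hI j).pow_card_eq_self_iff g).symm
    _ ↔ _ := by simp only [← map_pow, mk_iInf_eq_mk_iff]

end Kronecker

end Ideal

theorem exists_orthogonal_idempotent_basis_of_ker_psi_general
    {Fq : Type*} [Field Fq] [Fintype Fq] (n t : ℕ)
    (I : Fin t → Ideal (MvPolynomial (Fin n) Fq))
    (hprimary : ∀ i, (I i).IsPrimary)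
    (hcomax : ∀ i j, i ≠ j → I i ⊔ I j = ⊤) :
    ∃ h : Fin t → MvPolynomial (Fin n) Fq,
      (∀ i, h i ∈ ⨅ j, ⨅ _ : j ≠ i, I j) ∧
      (∀ i, h i ∉ I i) ∧
      (∀ i, (h i) ^ 2 - h i ∈ ⨅ j, I j) ∧
      (∀ i j, i ≠ j → h i * h j ∈ ⨅ j', I j') ∧
      LinearIndependent Fq (fun i => Ideal.Quotient.mk (⨅ j, I j) (h i)) ∧
      (∀ f : MvPolynomial (Fin n) Fq ⧸ (⨅ j, I j),
        f ∈ Submodule.span Fq (Set.range fun i => Ideal.Quotient.mk (⨅ j, I j) (h i)) ↔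
          f ^ Fintype.card Fq = f) := by
  choose h hmem hmk using Ideal.exists_mem_iInf_ne_mk_eq_ite (fun i j => hcomax i j)
  have hne_top i : I i ≠ ⊤ := (hprimary i).ne_top
  refine ⟨h, hmem, fun i => Ideal.notMem_self_of_mk_eq_ite hmk (hne_top i), Ideal.sq_sub_self_mem_iInf hmk,
    fun i j => Ideal.mul_mem_iInf_of_ne hmk, Ideal.linearIndependent_mk_iInf hmk hne_top,
    fun f => ?_⟩
  obtain ⟨g, rfl⟩ := Ideal.Quotient.mk_surjective f
  exact Ideal.mk_iInf_mem_span_iff hmk hprimary g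

/-- Let `I ⊆ F_q[x₁,…,x_n]` be a zero-dimensional ideal with irredundant primary
decomposition `I = I₁ ∩ ⋯ ∩ I_t` into pairwise comaximal primary ideals, and set
`J_i = ⋂_{j ≠ i} I_j`.  Then there are polynomials `h₁, …, h_t` with `h_i ∈ J_i`,
`h_i ∉ I_i`, `h_i² ≡ h_i (mod I)`, `h_i h_j ∈ I` for `i ≠ j`, and whose residues form an
`F_q`-basis of `Ker(Ψ_I) = {f̄ : f̄^q = f̄}`; thus `Ker(Ψ_I)` is the internal direct sum of
the one-dimensional `F_q`-algebras `F_q·h̄_i`. -/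
theorem exists_orthogonal_idempotent_basis_of_ker_psi
    {Fq : Type*} [Field Fq] [Fintype Fq] (n t : ℕ)
    (I : Fin t → Ideal (MvPolynomial (Fin n) Fq))
    (hprimary : ∀ i, (I i).IsPrimary)
    (hcomax : ∀ i j, i ≠ j → I i ⊔ I j = ⊤)
    (hirred : ∀ i, ¬ (⨅ j, ⨅ _ : j ≠ i, I j) ≤ I i)
    (hzerodim : FiniteDimensional Fq (MvPolynomial (Fin n) Fq ⧸ (⨅ i, I i))) :
    ∃ h : Fin t → MvPolynomial (Fin n) Fq,
      (∀ i, h i ∈ ⨅ j, ⨅ _ : j ≠ i, I j) ∧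
      (∀ i, h i ∉ I i) ∧
      (∀ i, (h i) ^ 2 - h i ∈ ⨅ j, I j) ∧
      (∀ i j, i ≠ j → h i * h j ∈ ⨅ j', I j') ∧
      LinearIndependent Fq (fun i => Ideal.Quotient.mk (⨅ j, I j) (h i)) ∧
      (∀ f : MvPolynomial (Fin n) Fq ⧸ (⨅ j, I j),
        f ∈ Submodule.span Fq (Set.range fun i => Ideal.Quotient.mk (⨅ j, I j) (h i)) ↔
          f ^ Fintype.card Fq = f) :=
  exists_orthogonal_idempotent_basis_of_ker_psi_general n t I hprimary hcomax
end
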